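/- If (H, f) is a minimal non-strictly f-degenerate pair over a graph G (H has no strictly f-degenerate transversal, but removing all list vertices of any single vertex of G yields a cover that has one), then G is connected and f(v,1) + f(v,2) + … + f(v,κ) ≤ deg_G(v) for every vertex v of G. -/

import Mathlib

/-- A cover of a graph `G` with lists of size `κ`. -/
structure GraphCover {V : Type*} (G : SimpleGraph V) (κ : ℕ) where
  H : SimpleGraph (V × Fin κ)
  indep : ∀ (v : V) (i j : Fin κ), ¬ H.Adj (v, i) (v, j)
  matchingL : ∀ (u v : V) (i j j' : Fin κ),
    H.Adj (u, i) (v, j) → H.Adj (u, i) (v, j') → j = j'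
  matchingR : ∀ (u v : V) (i i' j : Fin κ),
    H.Adj (u, i) (v, j) → H.Adj (u, i') (v, j) → i = i'
  support : ∀ (u v : V) (i j : Fin κ), H.Adj (u, i) (v, j) → G.Adj u v

/-- The subgraph of the cover `H` induced by the partial transversal choosing `(v, g v)`
for the vertices `v ∈ S`, viewed as a graph on `V` (vertices outside `S` are isolated). -/
def coverGraphOn {V : Type*} {G : SimpleGraph V} {κ : ℕ} (C : GraphCover G κ)
    (S : Set V) (g : V → Fin κ) : SimpleGraph V where
  Adj u w := u ∈ S ∧ w ∈ S ∧ C.H.Adj (u, g u) (w, g w)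
  symm := by
    constructor
    rintro u w ⟨hu, hw, h⟩
    exact ⟨hw, hu, h.symm⟩
  loopless := by
    constructor
    rintro u ⟨-, -, h⟩
    exact C.H.irrefl h

/-- The cover `H` restricted to the lists of the vertices in `S` has a strictly
`f`-degenerate transversal: there is a choice `g` such that every nonempty subgraph of
the chosen transversal graph lying inside `S` has a vertex `(v, g v)` of degree less
than `f (v, g v)`. -/
def HasSDTOn {V : Type*} {G : SimpleGraph V} {κ : ℕ} (C : GraphCover G κ)
    (f : V × Fin κ → ℕ) (S : Set V) : Prop :=
  ∃ g : V → Fin κ, ∀ Γ : (coverGraphOn C S g).Subgraph, Γ.verts ⊆ S → Γ.verts.Nonempty →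
    ∃ v ∈ Γ.verts, (Γ.neighborSet v).ncard < f (v, g v)

/-!
Minimality gives, for every vertex `v`, a strictly `f`-degenerate transversal `g_v` of `H − L_v`.
If `a` and `b` were in different components of `G`, take `g_b` on the component of `a` and `g_a`
elsewhere: no edge of the cover crosses between the two parts, so a nonempty subgraph of this
transversal has a nonempty part closed under adjacency on which it agrees with one of the two
witnesses. If `deg v < ∑ i, f (v, i)`, the matching property splits the neighbours of `v` in `g_v`
among the copies `(v, i)`, so some `(v, i)` has fewer than `f (v, i)` of them; adding it to `g_v`
gives a strictly `f`-degenerate transversal of `H`.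
-/

open Finset

namespace GraphCover

variable {V : Type*} {G : SimpleGraph V} {κ : ℕ} (C : GraphCover G κ) (f : V × Fin κ → ℕ)

/-- `HasSDTOn C f S` unfolds to `∃ g, C.IsSDTransversalOn f S g`. -/
def IsSDTransversalOn (S : Set V) (g : V → Fin κ) : Prop :=
  ∀ Γ : (coverGraphOn C S g).Subgraph, Γ.verts ⊆ S → Γ.verts.Nonempty →
    ∃ v ∈ Γ.verts, (Γ.neighborSet v).ncard < f (v, g v)

variable {C f}

lemma IsSDTransversalOn.exists_ncard_lt_of_eqOn {S S' A : Set V} {g g' : V → Fin κ}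
    (hg' : C.IsSDTransversalOn f S' g') (hAS' : A ⊆ S') (hgA : Set.EqOn g g' A)
    (Γ : (coverGraphOn C S g).Subgraph) (hclosed : ∀ u ∈ A, ∀ w, Γ.Adj u w → w ∈ A)
    (hmeets : (Γ.verts ∩ A).Nonempty) :
    ∃ u ∈ Γ.verts, (Γ.neighborSet u).ncard < f (u, g u) := by
  let Γ' : (coverGraphOn C S' g').Subgraph :=
    { verts := Γ.verts ∩ A
      Adj := fun u w => Γ.Adj u w ∧ u ∈ A ∧ w ∈ A
      adj_sub := by
        rintro u w ⟨h, hu, hw⟩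
        obtain ⟨-, -, hH⟩ := Γ.adj_sub h
        exact ⟨hAS' hu, hAS' hw, by rwa [hgA hu, hgA hw] at hH⟩
      edge_vert := fun ⟨h, hu, _⟩ => ⟨Γ.edge_vert h, hu⟩
      symm := ⟨fun _ _ ⟨h, hu, hw⟩ => ⟨h.symm, hw, hu⟩⟩ }
  obtain ⟨u, ⟨huΓ, huA⟩, hlt⟩ := hg' Γ' (fun _ hx => hAS' hx.2) hmeets
  have hnbr : Γ'.neighborSet u = Γ.neighborSet u :=
    Set.ext fun w => ⟨fun h => h.1, fun h => ⟨h, huA, hclosed u huA w h⟩⟩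
  exact ⟨u, huΓ, by rwa [hnbr, ← hgA huA] at hlt⟩

lemma IsSDTransversalOn.piecewise {A S₁ S₂ : Set V} [DecidablePred (· ∈ A)]
    (hA : ∀ u w, G.Adj u w → (u ∈ A ↔ w ∈ A)) {g₁ g₂ : V → Fin κ}
    (hg₁ : C.IsSDTransversalOn f S₁ g₁) (hAS₁ : A ⊆ S₁)
    (hg₂ : C.IsSDTransversalOn f S₂ g₂) (hAS₂ : Aᶜ ⊆ S₂) (S : Set V) :
    C.IsSDTransversalOn f S (A.piecewise g₁ g₂) := by
  intro Γ _ hne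
  have hAdj_iff {u w : V} (h : Γ.Adj u w) : u ∈ A ↔ w ∈ A :=
    hA u w (C.support u w _ _ (Γ.adj_sub h).2.2)
  by_cases hmeets : (Γ.verts ∩ A).Nonempty
  · exact hg₁.exists_ncard_lt_of_eqOn hAS₁ (Set.piecewise_eqOn A g₁ g₂) Γ
      (fun u hu w h => (hAdj_iff h).1 hu) hmeets
  · obtain ⟨x, hx⟩ := hne
    exact hg₂.exists_ncard_lt_of_eqOn hAS₂ (Set.piecewise_eqOn_compl A g₁ g₂) Γ
      (fun u hu w h hw => hu ((hAdj_iff h).2 hw)) ⟨x, hx, fun hxA => hmeets ⟨x, hx, hxA⟩⟩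

lemma IsSDTransversalOn.update [Finite V] [DecidableEq V] {v : V} {g : V → Fin κ}
    (hg : C.IsSDTransversalOn f {v}ᶜ g) {i : Fin κ}
    (hi : {u | C.H.Adj (v, i) (u, g u)}.ncard < f (v, i)) (S : Set V) :
    C.IsSDTransversalOn f S (Function.update g v i) := by
  intro Γ _ hne
  by_cases hv : v ∈ Γ.verts
  · refine ⟨v, hv, ?_⟩
    have hnbr : Γ.neighborSet v ⊆ {u | C.H.Adj (v, i) (u, g u)} := by
      intro w hw
      have hH := (Γ.adj_sub hw).2.2
      rwa [Function.update_self, Function.update_of_ne (Γ.adj_sub hw).ne'] at hH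
    calc (Γ.neighborSet v).ncard ≤ {u | C.H.Adj (v, i) (u, g u)}.ncard :=
          Set.ncard_le_ncard hnbr (Set.toFinite _)
      _ < f (v, Function.update g v i v) := by rwa [Function.update_self]
  · obtain ⟨x, hx⟩ := hne
    refine hg.exists_ncard_lt_of_eqOn subset_rfl (fun u hu => Function.update_of_ne hu i g) Γ
      (fun u _ w h hw => hv ?_) ⟨x, hx, fun hxv => hv (hxv ▸ hx)⟩
    exact (show w = v from hw) ▸ Γ.edge_vert h.symm

lemma sum_ncard_adj_le_degree [Fintype V] [DecidableRel G.Adj] (g : V → Fin κ) (v : V) :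
    ∑ i, {u | C.H.Adj (v, i) (u, g u)}.ncard ≤ G.degree v := by
  classical
  let F : Fin κ → Finset V := fun i => {u | C.H.Adj (v, i) (u, g u)}
  have hdisj : (Set.univ : Set (Fin κ)).PairwiseDisjoint F := by
    intro i _ j _ hij
    refine disjoint_left.2 fun u hui huj => hij ?_
    simp only [F, mem_filter, mem_univ, true_and] at hui huj
    exact C.matchingR v u i j (g u) hui huj
  have hsub : univ.biUnion F ⊆ G.neighborFinset v := by
    intro u hu
    obtain ⟨i, -, hi⟩ := mem_biUnion.1 hu
    exact (G.mem_neighborFinset v u).2 (C.support v u i (g u) (mem_filter.1 hi).2)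
  calc ∑ i, {u | C.H.Adj (v, i) (u, g u)}.ncard = ∑ i, #(F i) := by
        simp only [F, Set.ncard_eq_toFinset_card', Set.toFinset_ofPred]
    _ = #(univ.biUnion F) := (card_biUnion (by simpa using hdisj)).symm
    _ ≤ #(G.neighborFinset v) := card_le_card hsub
    _ = G.degree v := G.card_neighborFinset_eq_degree v

lemma hasSDTOn_of_isEmpty [IsEmpty V] (S : Set V) : HasSDTOn C f S :=
  ⟨isEmptyElim, fun _ _ ⟨x, _⟩ => isEmptyElim x⟩

lemma hasSDTOn_univ_of_not_preconnected (hG : ¬ G.Preconnected)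
    (hmin : ∀ v, HasSDTOn C f {v}ᶜ) : HasSDTOn C f Set.univ := by
  classical
  obtain ⟨a, b, hab⟩ : ∃ a b, ¬ G.Reachable a b := by
    simpa [SimpleGraph.Preconnected] using hG
  obtain ⟨ga, hga⟩ := hmin a
  obtain ⟨gb, hgb⟩ := hmin b
  refine ⟨_, IsSDTransversalOn.piecewise (A := {x | G.Reachable a x})
    (fun u w h => ⟨fun hu => hu.trans h.reachable, fun hw => hw.trans h.symm.reachable⟩)
    hgb ?_ hga ?_ Set.univ⟩
  · rintro x hx rfl
    exact hab hx
  · rintro x hx rfl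
    exact hx (SimpleGraph.Reachable.refl x)

lemma hasSDTOn_univ_of_degree_lt [Fintype V] [DecidableRel G.Adj] {v : V}
    (hv : HasSDTOn C f {v}ᶜ) (hdeg : G.degree v < ∑ i, f (v, i)) :
    HasSDTOn C f Set.univ := by
  classical
  obtain ⟨g, hg⟩ : ∃ g, C.IsSDTransversalOn f {v}ᶜ g := hv
  obtain ⟨i, -, hi⟩ := exists_lt_of_sum_lt (hdeg.trans_le' (C.sum_ncard_adj_le_degree g v))
  exact ⟨_, hg.update hi Set.univ⟩

end GraphCover

open GraphCover in
/-- If `(H, f)` is a minimal non-strictly `f`-degenerate pair over `G` (`H` has no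
strictly `f`-degenerate transversal, but deleting the list `L_v` of any single vertex `v`
yields a cover with one), then `G` is connected and
`f(v,1) + ⋯ + f(v,κ) ≤ deg_G(v)` for every vertex `v`. -/
theorem minimal_pair_connected_and_degree {V : Type*} [Fintype V] (G : SimpleGraph V)
    [DecidableRel G.Adj] {κ : ℕ} (C : GraphCover G κ) (f : V × Fin κ → ℕ)
    (hno : ¬ HasSDTOn C f Set.univ)
    (hmin : ∀ v : V, HasSDTOn C f {v}ᶜ) :
    G.Connected ∧ ∀ v : V, (∑ i : Fin κ, f (v, i)) ≤ G.degree v := by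
  refine ⟨(SimpleGraph.connected_iff G).2 ⟨?_, ?_⟩, fun v => ?_⟩
  · by_contra hG
    exact hno (hasSDTOn_univ_of_not_preconnected hG hmin)
  · by_contra hV
    have : IsEmpty V := not_nonempty_iff.1 hV
    exact hno (hasSDTOn_of_isEmpty Set.univ)
  · by_contra hdeg
    exact hno (hasSDTOn_univ_of_degree_lt (hmin v) (not_le.1 hdeg))
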